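/- arXiv:2211.15078 — 2 statements merged into one kernel-verified Lean document; each statement's English description precedes it below -/
import Mathlib

section
/- First-order coherence of the multiplicative coarse-level model: with γ̃_mult(x) = h(X)/f(x₀) + ⟨g_m, x − x₀⟩, where g_m = f(x₀)⁻¹ • Iᵀ∇h(X) − (h(X)/f(x₀)²) • ∇f(x₀), and h_mult(x) = γ̃_mult(x)·f(x), if f is differentiable at x₀ with f(x₀) ≠ 0 and h is differentiable at X, then h_mult is differentiable at x₀ and ∇h_mult(x₀) = Iᵀ∇h(X). -/
open RealInnerProductSpace

/-- First-order coherence of the multiplicative coarse-level model: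
`h_mult` is differentiable at `x₀` with `∇h_mult x₀ = Iᵀ ∇h X`. -/
theorem multiplicative_model_first_order_coherence
    {n N : ℕ}
    (I : EuclideanSpace ℝ (Fin n) →L[ℝ] EuclideanSpace ℝ (Fin N))
    (h : EuclideanSpace ℝ (Fin N) → ℝ)
    (f : EuclideanSpace ℝ (Fin n) → ℝ)
    (x₀ : EuclideanSpace ℝ (Fin n))
    (X : EuclideanSpace ℝ (Fin N)) (hX : X = I x₀)
    (hf : DifferentiableAt ℝ f x₀)
    (hh : DifferentiableAt ℝ h X)
    (hf0 : f x₀ ≠ 0)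
    (g_m : EuclideanSpace ℝ (Fin n))
    (g_m_def : g_m =
      (f x₀)⁻¹ • ContinuousLinearMap.adjoint I (gradient h X) -
        (h X / (f x₀) ^ 2) • gradient f x₀)
    (γ_mult : EuclideanSpace ℝ (Fin n) → ℝ)
    (γ_mult_def : ∀ x, γ_mult x = h X / f x₀ + ⟪g_m, x - x₀⟫)
    (h_mult : EuclideanSpace ℝ (Fin n) → ℝ)
    (h_mult_def : ∀ x, h_mult x = γ_mult x * f x) :
    DifferentiableAt ℝ h_mult x₀ ∧
      gradient h_mult x₀ = ContinuousLinearMap.adjoint I (gradient h X) := by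
  -- fderiv of γ_mult
  have hγ : HasFDerivAt γ_mult (innerSL ℝ g_m) x₀ := by
    have h2 : HasFDerivAt (fun x : EuclideanSpace ℝ (Fin n) => ⟪g_m, x⟫)
        (innerSL ℝ g_m) x₀ := (innerSL ℝ g_m).hasFDerivAt
    have h3 := (h2.sub_const ⟪g_m, x₀⟫).const_add (h X / f x₀)
    have h1 : HasFDerivAt (fun x : EuclideanSpace ℝ (Fin n) =>
        h X / f x₀ + ⟪g_m, x - x₀⟫) (innerSL ℝ g_m) x₀ := by
      exact h3.congr_of_eventuallyEq (by filter_upwards with x; rw [inner_sub_right])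
    exact h1.congr_of_eventuallyEq (by filter_upwards with x using γ_mult_def x)
  have hfd : HasFDerivAt f (fderiv ℝ f x₀) x₀ := hf.hasFDerivAt
  have hγx₀ : γ_mult x₀ = h X / f x₀ := by
    rw [γ_mult_def, sub_self, inner_zero_right, add_zero]
  have hprod : HasFDerivAt h_mult
      (γ_mult x₀ • fderiv ℝ f x₀ + f x₀ • innerSL ℝ g_m) x₀ := by
    have := hγ.mul hfd
    exact this.congr_of_eventuallyEq (by filter_upwards with x using h_mult_def x)
  -- convert to gradient
  have hgradG : HasGradientAt h_mult (γ_mult x₀ • gradient f x₀ + f x₀ • g_m) x₀ := by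
    rw [hasGradientAt_iff_hasFDerivAt]
    have hd : InnerProductSpace.toDual ℝ (EuclideanSpace ℝ (Fin n)) (gradient f x₀)
        = fderiv ℝ f x₀ := LinearIsometryEquiv.apply_symm_apply _ _
    refine hprod.congr_fderiv ?_
    ext y
    rw [← hd]; simp [inner_add_left, real_inner_smul_left]
  refine ⟨hgradG.differentiableAt, ?_⟩
  rw [hgradG.gradient, hγx₀, g_m_def]
  rw [smul_sub, smul_smul, smul_smul]
  rw [mul_inv_cancel₀ hf0, one_smul]
  have hsc : f x₀ * (h X / f x₀ ^ 2) = h X / f x₀ := by field_simp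
  rw [hsc]
  abel
end

section
/- Zeroth- and first-order coherence of the hybrid coarse-level model: let h_mix(x) = w_add·h_add(x) + w_mult·h_mult(x) with real weights satisfying w_add + w_mult = 1, where h_add(x) = f(x) + (h(X) − f(x₀)) + ⟨Iᵀ∇h(X) − ∇f(x₀), x − x₀⟩ and h_mult(x) = γ̃_mult(x)·f(x) with γ̃_mult(x) = h(X)/f(x₀) + ⟨g_m, x − x₀⟩, g_m = f(x₀)⁻¹ • Iᵀ∇h(X) − (h(X)/f(x₀)²) • ∇f(x₀). If f is differentiable at x₀ with f(x₀) ≠ 0 and h is differentiable at X, then h_mix(x₀) = h(X) and h_mix is differentiable at x₀ with ∇h_mix(x₀) = Iᵀ∇h(X). -/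
open RealInnerProductSpace

/-- Zeroth- and first-order coherence of the hybrid coarse-level model:
`h_mix x₀ = h X` and `h_mix` is differentiable at `x₀` with `∇h_mix x₀ = Iᵀ ∇h X`. -/
theorem hybrid_model_coherence
    {n N : ℕ}
    (I : EuclideanSpace ℝ (Fin n) →L[ℝ] EuclideanSpace ℝ (Fin N))
    (h : EuclideanSpace ℝ (Fin N) → ℝ)
    (f : EuclideanSpace ℝ (Fin n) → ℝ)
    (x₀ : EuclideanSpace ℝ (Fin n))
    (X : EuclideanSpace ℝ (Fin N)) (hX : X = I x₀)
    (hf : DifferentiableAt ℝ f x₀)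
    (hh : DifferentiableAt ℝ h X)
    (hf0 : f x₀ ≠ 0)
    (w_add w_mult : ℝ) (hw : w_add + w_mult = 1)
    (h_add : EuclideanSpace ℝ (Fin n) → ℝ)
    (h_add_def : ∀ x, h_add x =
      f x + (h X - f x₀) +
        ⟪ContinuousLinearMap.adjoint I (gradient h X) - gradient f x₀, x - x₀⟫)
    (g_m : EuclideanSpace ℝ (Fin n))
    (g_m_def : g_m =
      (f x₀)⁻¹ • ContinuousLinearMap.adjoint I (gradient h X) -
        (h X / (f x₀) ^ 2) • gradient f x₀)
    (γ_mult : EuclideanSpace ℝ (Fin n) → ℝ)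
    (γ_mult_def : ∀ x, γ_mult x = h X / f x₀ + ⟪g_m, x - x₀⟫)
    (h_mult : EuclideanSpace ℝ (Fin n) → ℝ)
    (h_mult_def : ∀ x, h_mult x = γ_mult x * f x)
    (h_mix : EuclideanSpace ℝ (Fin n) → ℝ)
    (h_mix_def : ∀ x, h_mix x = w_add * h_add x + w_mult * h_mult x) :
    h_mix x₀ = h X ∧
      DifferentiableAt ℝ h_mix x₀ ∧
        gradient h_mix x₀ = ContinuousLinearMap.adjoint I (gradient h X) := by

  classical
  set g := ContinuousLinearMap.adjoint I (gradient h X) with hg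
  set gf := gradient f x₀ with hgfdef
  -- zeroth order
  have hval : h_mix x₀ = h X := by
    rw [h_mix_def, h_add_def, h_mult_def, γ_mult_def]
    simp only [sub_self, inner_zero_right, add_zero]
    field_simp
    linear_combination (h X) * hw
  refine ⟨hval, ?_⟩
  have hFf : HasFDerivAt f (InnerProductSpace.toDual ℝ (EuclideanSpace ℝ (Fin n)) gf) x₀ := by
    rw [hgfdef]
    unfold gradient
    rw [LinearIsometryEquiv.apply_symm_apply]
    exact hf.hasFDerivAt
  have hinner : ∀ (c : EuclideanSpace ℝ (Fin n)), HasFDerivAt (fun x => ⟪c, x - x₀⟫)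
      (InnerProductSpace.toDual ℝ (EuclideanSpace ℝ (Fin n)) c) x₀ := by
    intro c
    have h1 : HasFDerivAt
        (fun x : EuclideanSpace ℝ (Fin n) => (InnerProductSpace.toDual ℝ (EuclideanSpace ℝ (Fin n)) c) x - (InnerProductSpace.toDual ℝ (EuclideanSpace ℝ (Fin n)) c) x₀)
        (InnerProductSpace.toDual ℝ (EuclideanSpace ℝ (Fin n)) c) x₀ :=
      ((InnerProductSpace.toDual ℝ (EuclideanSpace ℝ (Fin n)) c).hasFDerivAt).sub_const _
    have heq : (fun x : EuclideanSpace ℝ (Fin n) => ⟪c, x - x₀⟫) =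
        fun x : EuclideanSpace ℝ (Fin n) => (InnerProductSpace.toDual ℝ (EuclideanSpace ℝ (Fin n)) c) x - (InnerProductSpace.toDual ℝ (EuclideanSpace ℝ (Fin n)) c) x₀ := by
      funext x
      simp [inner_sub_right]
    rw [heq]
    exact h1
  -- h_add
  have hAdd : HasFDerivAt h_add (InnerProductSpace.toDual ℝ (EuclideanSpace ℝ (Fin n)) g) x₀ := by
    have h1 := (hFf.add_const (h X - f x₀)).add (hinner (g - gf))
    have heq : (fun x : EuclideanSpace ℝ (Fin n) => f x + (h X - f x₀) + ⟪g - gf, x - x₀⟫) = h_add := by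
      funext x; rw [h_add_def]
    rw [show ((fun x : EuclideanSpace ℝ (Fin n) => f x + (h X - f x₀)) + fun x => ⟪g - gf, x - x₀⟫) = h_add from heq] at h1
    refine h1.congr_fderiv ?_
    rw [map_sub]
    abel
  -- γ_mult
  have hγ : HasFDerivAt γ_mult (InnerProductSpace.toDual ℝ (EuclideanSpace ℝ (Fin n)) g_m) x₀ := by
    have h1 := (hinner g_m).const_add (h X / f x₀)
    have heq : (fun x : EuclideanSpace ℝ (Fin n) => h X / f x₀ + ⟪g_m, x - x₀⟫) = γ_mult := by
      funext x; rw [γ_mult_def]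
    rwa [heq] at h1
  have hγ0 : γ_mult x₀ = h X / f x₀ := by
    rw [γ_mult_def]; simp
  -- h_mult
  have hMult : HasFDerivAt h_mult (InnerProductSpace.toDual ℝ (EuclideanSpace ℝ (Fin n)) g) x₀ := by
    have h1 := hγ.mul hFf
    have heq : (fun x : EuclideanSpace ℝ (Fin n) => γ_mult x * f x) = h_mult := by
      funext x; rw [h_mult_def]
    rw [show γ_mult * f = h_mult from heq] at h1
    refine h1.congr_fderiv ?_
    ext v
    simp only [ContinuousLinearMap.add_apply, ContinuousLinearMap.coe_smul', Pi.smul_apply,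
      InnerProductSpace.toDual_apply_apply, smul_eq_mul, hγ0, g_m_def, inner_sub_left,
      inner_smul_left, RCLike.inner_apply, conj_trivial]
    field_simp
    ring
  -- h_mix
  have hMix : HasFDerivAt h_mix (InnerProductSpace.toDual ℝ (EuclideanSpace ℝ (Fin n)) g) x₀ := by
    have h1 := (hAdd.const_mul w_add).add (hMult.const_mul w_mult)
    have heq : (fun x : EuclideanSpace ℝ (Fin n) => w_add * h_add x + w_mult * h_mult x) = h_mix := by
      funext x; rw [h_mix_def]
    rw [show ((fun y : EuclideanSpace ℝ (Fin n) => w_add * h_add y) + fun y => w_mult * h_mult y) = h_mix from heq] at h1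
    refine h1.congr_fderiv ?_
    rw [← add_smul, hw, one_smul]
  have hGrad : HasGradientAt h_mix g x₀ :=
    (hasGradientAt_iff_hasFDerivAt).2 hMix
  exact ⟨hGrad.differentiableAt, hGrad.gradient⟩
end
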